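/- If v = (v_k)_{k∈S} and v' = (v'_k)_{k∈S} are families with v_k, v'_k ∈ [0,1] and v_k ≤ v'_k for every k ∈ S, then ρ(v) ≤ ρ(v'). -/

import Mathlib

open Set

/-!
Write the series as `F_a(u) = ∑ a_j u^j` with coefficients `a_j = b_j v_j` (`v_j = 1` off `S`).
Raising `v` raises every coefficient, because `b_j ≥ 0` on `S`, so `F_v(ρ(v')) ≤ F_{v'}(ρ(v')) = 0`,
while `F_v(0) = b_0 v_0 ≥ 0`. By the intermediate value theorem `F_v` has a root in `[0, ρ(v')]`.
-/

lemma norm_mul_pow_le_norm (x : ℝ) {u : ℝ} (hu : u ∈ Icc (0 : ℝ) 1) (j : ℕ) :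
    ‖x * u ^ j‖ ≤ ‖x‖ := by
  rw [norm_mul, norm_pow]
  exact mul_le_of_le_one_right (norm_nonneg _)
    (pow_le_one₀ (norm_nonneg u) (by simpa [abs_of_nonneg hu.1] using hu.2))

lemma summable_mul_pow_of_summable_norm {a : ℕ → ℝ} (ha : Summable (‖a ·‖)) {u : ℝ}
    (hu : u ∈ Icc (0 : ℝ) 1) : Summable (fun j => a j * u ^ j) :=
  ha.of_norm_bounded fun j => norm_mul_pow_le_norm (a j) hu j

lemma continuousOn_tsum_mul_pow {a : ℕ → ℝ} (ha : Summable (‖a ·‖)) :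
    ContinuousOn (fun u => ∑' j, a j * u ^ j) (Icc 0 1) :=
  continuousOn_tsum (fun j => (continuous_const.mul (continuous_pow j)).continuousOn) ha
    fun j _ hu => norm_mul_pow_le_norm (a j) hu j

lemma tsum_mul_zero_pow (a : ℕ → ℝ) : ∑' j, a j * (0 : ℝ) ^ j = a 0 := by
  rw [tsum_eq_single 0 fun j hj => by simp [hj]]
  simp

lemma exists_tsum_mul_pow_eq_zero_of_le {a a' : ℕ → ℝ} (ha : Summable (‖a ·‖))
    (ha' : Summable (‖a' ·‖)) (hle : a ≤ a') (h0 : 0 ≤ a 0) {ρ' : ℝ}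
    (hρ' : ρ' ∈ Icc (0 : ℝ) 1) (hroot : ∑' j, a' j * ρ' ^ j = 0) :
    ∃ c ∈ Icc 0 ρ', ∑' j, a j * c ^ j = 0 := by
  have hsub : Icc 0 ρ' ⊆ Icc (0 : ℝ) 1 := Icc_subset_Icc le_rfl hρ'.2
  have hneg : ∑' j, a j * ρ' ^ j ≤ 0 := hroot ▸
    Summable.tsum_le_tsum (fun j => mul_le_mul_of_nonneg_right (hle j) (pow_nonneg hρ'.1 j))
      (summable_mul_pow_of_summable_norm ha hρ') (summable_mul_pow_of_summable_norm ha' hρ')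
  have hpos : 0 ≤ ∑' j, a j * (0 : ℝ) ^ j := (tsum_mul_zero_pow a).symm ▸ h0
  exact intermediate_value_Icc' hρ'.1 ((continuousOn_tsum_mul_pow ha).mono hsub) ⟨hneg, hpos⟩

def extendByOne (S : Finset ℕ) (v : S → ℝ) (j : ℕ) : ℝ :=
  if h : j ∈ S then v ⟨j, h⟩ else 1

lemma dite_mem_eq_mul_extendByOne (S : Finset ℕ) (v : S → ℝ) (b : ℕ → ℝ) (u : ℝ) (j : ℕ) :
    (if h : j ∈ S then b j * v ⟨j, h⟩ * u ^ j else b j * u ^ j) =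
      b j * extendByOne S v j * u ^ j := by
  unfold extendByOne
  split_ifs <;> simp

lemma extendByOne_mem_Icc {S : Finset ℕ} {v : S → ℝ} (hv : ∀ k, v k ∈ Icc (0 : ℝ) 1) (j : ℕ) :
    extendByOne S v j ∈ Icc (0 : ℝ) 1 := by
  unfold extendByOne
  split_ifs
  exacts [hv _, ⟨zero_le_one, le_rfl⟩]

lemma summable_norm_mul_extendByOne {b : ℕ → ℝ} (hb : Summable b) {S : Finset ℕ} {v : S → ℝ}
    (hv : ∀ k, v k ∈ Icc (0 : ℝ) 1) : Summable fun j => ‖b j * extendByOne S v j‖ :=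
  hb.abs.of_nonneg_of_le (fun _ => norm_nonneg _) fun j => by
    have hw := extendByOne_mem_Icc hv j
    rw [norm_mul, Real.norm_of_nonneg hw.1]
    exact mul_le_of_le_one_right (abs_nonneg _) hw.2

lemma mul_extendByOne_le_mul_extendByOne {b : ℕ → ℝ} {S : Finset ℕ} {v v' : S → ℝ}
    (hbS : ∀ k ∈ S, 0 ≤ b k) (hle : ∀ k, v k ≤ v' k) (j : ℕ) :
    b j * extendByOne S v j ≤ b j * extendByOne S v' j := by
  unfold extendByOne
  split_ifs with h
  exacts [mul_le_mul_of_nonneg_left (hle _) (hbS j h), le_rfl]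

theorem stmt_6_general (b : ℕ → ℝ)
    (hb_nonneg : ∀ j, j ≠ 1 → 0 ≤ b j)
    (hb_sum : Summable b)
    (S : Finset ℕ)
    (hbS : ∀ k ∈ S, 0 < b k)
    (v v' : S → ℝ) (hv : ∀ k, v k ∈ Set.Icc (0:ℝ) 1) (hv' : ∀ k, v' k ∈ Set.Icc (0:ℝ) 1)
    (hle : ∀ k, v k ≤ v' k)
    (ρv ρv' : ℝ)
    (hρv : IsLeast {u ∈ Set.Icc (0:ℝ) 1 |
      (∑' j : ℕ, if h : j ∈ S then b j * v ⟨j, h⟩ * u ^ j else b j * u ^ j) = 0} ρv)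
    (hρv' : IsLeast {u ∈ Set.Icc (0:ℝ) 1 |
      (∑' j : ℕ, if h : j ∈ S then b j * v' ⟨j, h⟩ * u ^ j else b j * u ^ j) = 0} ρv') :
    ρv ≤ ρv' := by
  simp only [dite_mem_eq_mul_extendByOne] at hρv hρv'
  have hcoeff : (fun j => b j * extendByOne S v j) ≤ fun j => b j * extendByOne S v' j :=
    mul_extendByOne_le_mul_extendByOne (fun k hk => (hbS k hk).le) hle
  have hconst : 0 ≤ b 0 * extendByOne S v 0 :=
    mul_nonneg (hb_nonneg 0 zero_ne_one) (extendByOne_mem_Icc hv 0).1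
  obtain ⟨c, hc, hroot⟩ := exists_tsum_mul_pow_eq_zero_of_le
    (summable_norm_mul_extendByOne hb_sum hv) (summable_norm_mul_extendByOne hb_sum hv')
    hcoeff hconst hρv'.1.1 hρv'.1.2
  exact (hρv.2 ⟨⟨hc.1, hc.2.trans hρv'.1.1.2⟩, hroot⟩).trans hc.2

theorem stmt_6 (b : ℕ → ℝ)
    (hb_nonneg : ∀ j, j ≠ 1 → 0 ≤ b j) (hb1 : b 1 < 0)
    (hb_sum : Summable b) (hb_total : ∑' j, b j = 0)
    (S : Finset ℕ) (hS : S.Nonempty) (hS1 : 1 ∉ S)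
    (hbS : ∀ k ∈ S, 0 < b k)
    (v v' : S → ℝ) (hv : ∀ k, v k ∈ Set.Icc (0:ℝ) 1) (hv' : ∀ k, v' k ∈ Set.Icc (0:ℝ) 1)
    (hle : ∀ k, v k ≤ v' k)
    (ρv ρv' : ℝ)
    (hρv : IsLeast {u ∈ Set.Icc (0:ℝ) 1 |
      (∑' j : ℕ, if h : j ∈ S then b j * v ⟨j, h⟩ * u ^ j else b j * u ^ j) = 0} ρv)
    (hρv' : IsLeast {u ∈ Set.Icc (0:ℝ) 1 |
      (∑' j : ℕ, if h : j ∈ S then b j * v' ⟨j, h⟩ * u ^ j else b j * u ^ j) = 0} ρv') :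
    ρv ≤ ρv' :=
  stmt_6_general b hb_nonneg hb_sum S hbS v v' hv hv' hle ρv ρv' hρv hρv'
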